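/- Let π be strictly positive, and let Z ~ N(0, I_d), t > ℓh ≥ 0, and consider the one-step Euler–Maruyama update Z̄_t = Z̄_{ℓh} + (t − ℓh)∇log π(Z̄_{ℓh}) + √2 (B_t − B_{ℓh}) where B is standard Brownian motion. If ∇log π is λ-Lipschitz and 4λh ≤ 1 with t − ℓh ≤ h, then ‖∇log π(Z̄_t) − ∇log π(Z̄_{ℓh})‖² ≤ 8λ²(t−ℓh)² ‖∇log π(Z̄_t)‖² + 6λ² ‖B_t − B_{ℓh}‖². -/
import Mathlib


open MeasureTheory NNReal

set_option maxHeartbeats 1000000 in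
/-- One-step Euler–Maruyama discretization bound: if the score ∇log π is
λ-Lipschitz, 4λh ≤ 1, and Z̄_t = Z̄_{ℓh} + (t−ℓh)∇log π(Z̄_{ℓh}) + √2(B_t − B_{ℓh})
with 0 < t − ℓh ≤ h, then
‖∇log π(Z̄_t) − ∇log π(Z̄_{ℓh})‖² ≤ 8λ²(t−ℓh)²‖∇log π(Z̄_t)‖² + 6λ²‖B_t − B_{ℓh}‖². -/
theorem euler_maruyama_score_increment_bound (d : ℕ)
    (π : EuclideanSpace ℝ (Fin d) → ℝ) (lam : ℝ≥0) (h t s : ℝ)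
    (hπpos : ∀ x, 0 < π x)
    (hLip : LipschitzWith lam (gradient fun x => Real.log (π x)))
    (hh : 0 < h) (hs : 0 ≤ s) (hst : s < t) (hδ : t - s ≤ h)
    (hlamh : 4 * (lam : ℝ) * h ≤ 1)
    (z b : EuclideanSpace ℝ (Fin d)) :
    ‖gradient (fun x => Real.log (π x))
          (z + (t - s) • gradient (fun x => Real.log (π x)) z + Real.sqrt 2 • b)
        - gradient (fun x => Real.log (π x)) z‖ ^ 2
      ≤ 8 * (lam : ℝ) ^ 2 * (t - s) ^ 2
          * ‖gradient (fun x => Real.log (π x))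
              (z + (t - s) • gradient (fun x => Real.log (π x)) z
                + Real.sqrt 2 • b)‖ ^ 2
        + 6 * (lam : ℝ) ^ 2 * ‖b‖ ^ 2 := by
  set G := gradient (fun x => Real.log (π x)) with hG
  set δ := t - s with hδdef
  set u := G z with hu
  set w := z + δ • u + Real.sqrt 2 • b with hw
  set v := G w with hv
  have hδ0 : 0 < δ := by simp only [hδdef]; linarith
  have hL0 : (0:ℝ) ≤ (lam : ℝ) := lam.coe_nonneg
  have hLd : (lam:ℝ) * δ ≤ 1/4 := by nlinarith
  have hs2 : Real.sqrt 2 ^ 2 = 2 := Real.sq_sqrt (by norm_num)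
  have hs0 : (0:ℝ) ≤ Real.sqrt 2 := Real.sqrt_nonneg 2
  have hs15 : Real.sqrt 2 ≤ 3/2 := by nlinarith [sq_nonneg (Real.sqrt 2 - 3/2)]
  have hwz : w - z = δ • u + Real.sqrt 2 • b := by
    rw [hw]; abel
  have hkey : ‖v - u‖ ≤ (lam : ℝ) * ‖δ • u + Real.sqrt 2 • b‖ := by
    have := hLip.dist_le_mul w z
    rw [dist_eq_norm, dist_eq_norm, hwz] at this
    exact this
  have hnorm : ‖δ • u + Real.sqrt 2 • b‖ ≤ δ * ‖u‖ + Real.sqrt 2 * ‖b‖ := by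
    refine (norm_add_le _ _).trans ?_
    rw [norm_smul, norm_smul, Real.norm_of_nonneg hδ0.le, Real.norm_of_nonneg hs0]
  have h1 : ‖v - u‖ ≤ (lam : ℝ) * (δ * ‖u‖ + Real.sqrt 2 * ‖b‖) :=
    hkey.trans (mul_le_mul_of_nonneg_left hnorm hL0)
  have htri : ‖u‖ ≤ ‖v‖ + ‖v - u‖ := by
    have := norm_sub_le v (v - u)
    simpa using this
  have h2 : ‖u‖ ≤ ‖v‖ + (lam : ℝ) * (δ * ‖u‖ + Real.sqrt 2 * ‖b‖) := by
    linarith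
  set A := ‖u‖ with hAdef
  set V := ‖v‖ with hVdef
  set Bn := ‖b‖ with hBdef
  set N := ‖v - u‖ with hNdef
  have hN0 : 0 ≤ N := norm_nonneg _
  have hA0 : 0 ≤ A := norm_nonneg u
  have hV0 : 0 ≤ V := norm_nonneg v
  have hB0 : 0 ≤ Bn := norm_nonneg b
  clear_value N A V Bn v w u G δ
  have hprodA : (lam : ℝ) * δ * A ≤ (1/4) * A :=
    mul_le_mul_of_nonneg_right hLd (hA0)
  have hA : A ≤ (4/3) * V + (4/3) * Real.sqrt 2 * (lam : ℝ) * Bn := by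
    nlinarith [hA0, hV0, hB0, mul_nonneg hs0 (mul_nonneg hL0 (hB0))]
  -- bound δA + √2Bn
  have hdA : δ * A ≤ (4/3) * δ * V + (4/3) * Real.sqrt 2 * ((lam:ℝ) * δ) * Bn := by
    exact (mul_le_mul_of_nonneg_left hA hδ0.le).trans_eq (by ring)
  have hLdB : (4/3) * Real.sqrt 2 * ((lam:ℝ) * δ) * Bn ≤ (Real.sqrt 2 / 3) * Bn := by
    nlinarith [mul_nonneg hs0 (hB0), mul_nonneg hL0 hδ0.le, hB0]
  have hX : δ * A + Real.sqrt 2 * Bn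
      ≤ (4/3) * δ * V + (4 * Real.sqrt 2 / 3) * Bn := by
    linarith [hdA, hLdB]
  have hY0 : (0:ℝ) ≤ (4/3) * δ * V + (4 * Real.sqrt 2 / 3) * Bn := by
    have := mul_nonneg (mul_nonneg (by norm_num : (0:ℝ) ≤ 4/3) hδ0.le) (hV0)
    nlinarith [mul_nonneg hs0 (hB0)]
  have h5 : N ≤ (lam : ℝ) * ((4/3) * δ * V + (4 * Real.sqrt 2 / 3) * Bn) :=
    h1.trans (mul_le_mul_of_nonneg_left hX hL0)
  have h5sq : N ^ 2 ≤ ((lam : ℝ) * ((4/3) * δ * V + (4 * Real.sqrt 2 / 3) * Bn)) ^ 2 :=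
    pow_le_pow_left₀ hN0 h5 2
  have haux : ((4/3) * δ * V + (4 * Real.sqrt 2 / 3) * Bn) ^ 2
      ≤ 8 * δ ^ 2 * V ^ 2 + 6 * Bn ^ 2 := by
    nlinarith [sq_nonneg (3 * (δ * V) - 2 * Bn), hs2, hs15, hs0,
      mul_nonneg (mul_nonneg hδ0.le (hV0)) (hB0),
      hV0, hB0]
  have hauxL := mul_le_mul_of_nonneg_left haux (sq_nonneg (lam : ℝ))
  nlinarith [h5sq, hauxL]
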